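/- arXiv:math/0004092 — 2 statements merged into one kernel-verified Lean document; each statement's English description precedes it below -/
import Mathlib

section
/- Let q be a primitive l-th root of unity with l odd. In A(SL_q(2)), with α = a^l central, one has for 0 ≤ k ≤ l: a^{l-k} b^r c^s = q^{-k(r+s)} α · b^r c^s d^k − Σ_{j=1}^{k} p_{k,j}(q) a^{l-k} b^{r+j} c^{s+j}. -/
noncomputable section
open scoped TensorProduct

/-- The free `ℂ`-algebra on four generators `a, b, c, d`. -/
abbrev FreeSL : Type := FreeAlgebra ℂ (Fin 4)

def Fa : FreeSL := FreeAlgebra.ι ℂ 0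
def Fb : FreeSL := FreeAlgebra.ι ℂ 1
def Fc : FreeSL := FreeAlgebra.ι ℂ 2
def Fd : FreeSL := FreeAlgebra.ι ℂ 3

/-- The defining relations of `A(SL_q(2))`. -/
inductive SLqRel (q : ℂ) : FreeSL → FreeSL → Prop
  | ab : SLqRel q (Fa * Fb) (q • (Fb * Fa))
  | ac : SLqRel q (Fa * Fc) (q • (Fc * Fa))
  | bd : SLqRel q (Fb * Fd) (q • (Fd * Fb))
  | bc : SLqRel q (Fb * Fc) (Fc * Fb)
  | cd : SLqRel q (Fc * Fd) (q • (Fd * Fc))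
  | ad : SLqRel q (Fa * Fd - Fd * Fa) ((q - q⁻¹) • (Fb * Fc))
  | det : SLqRel q (Fa * Fd - q • (Fb * Fc)) 1

/-- The quantum coordinate algebra `A(SL_q(2))`. -/
abbrev ASLq (q : ℂ) : Type := RingQuot (SLqRel q)

def aq (q : ℂ) : ASLq q := RingQuot.mkAlgHom ℂ (SLqRel q) Fa
def bq (q : ℂ) : ASLq q := RingQuot.mkAlgHom ℂ (SLqRel q) Fb
def cq (q : ℂ) : ASLq q := RingQuot.mkAlgHom ℂ (SLqRel q) Fc
def dq (q : ℂ) : ASLq q := RingQuot.mkAlgHom ℂ (SLqRel q) Fd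

/-- The coefficients `p_{k,j}(q)`. -/
def pcoef (q : ℂ) (k j : ℕ) : ℂ :=
  q ^ (j ^ 2) * (∏ r ∈ Finset.Icc (j + 1) k, (q ^ (2 * r) - 1)) /
    (∏ s ∈ Finset.Icc 1 (k - j), (q ^ (2 * s) - 1))


/-!
Right multiplication by `d` lowers the power of `a`: by `a d = 1 + q b c` and the `q`-commutation
of `a` with `b` and `c`, `a^(i+1) b^m c^n d = q^(m+n) (a^i b^m c^n + q a^i b^(m+1) c^(n+1))`.
Applying this `k` times gives `a^N b^r c^s d^k = q^(k(r+s)) Σ_j P_{k,j} a^(N-k) b^(r+j) c^(s+j)`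
with coefficients `P` defined by a Pascal-type recurrence.
The closed form `p_{k,j}` obeys the same recurrence wherever its denominator
`∏_{s ≤ k-j} (q^(2s) - 1)` is nonzero; for `1 ≤ j ≤ k ≤ l` this holds because `l` is odd, so that
`q^2` is again a primitive `l`-th root of unity.
-/

open Finset

/-- `q^(j^2)` times the Gaussian binomial `[k, j]` in `q^2`; unlike `pcoef`, it involves no division
and vanishes for `j > k`. -/
def pcoefRec {R : Type*} [CommSemiring R] (q : R) : ℕ → ℕ → R
  | _, 0 => 1
  | 0, _ + 1 => 0
  | k + 1, j + 1 => q ^ (2 * (j + 1)) * pcoefRec q k (j + 1) + q ^ (2 * j + 1) * pcoefRec q k j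

section Coefficients

variable {R : Type*} [CommSemiring R] (q : R)

@[simp] lemma pcoefRec_zero_right (k : ℕ) : pcoefRec q k 0 = 1 := by
  cases k <;> rfl

lemma pcoefRec_succ_succ (k j : ℕ) : pcoefRec q (k + 1) (j + 1) =
    q ^ (2 * (j + 1)) * pcoefRec q k (j + 1) + q ^ (2 * j + 1) * pcoefRec q k j := rfl

lemma pcoefRec_eq_zero_of_lt {k j : ℕ} (h : k < j) : pcoefRec q k j = 0 := by
  induction k generalizing j with
  | zero => obtain ⟨j, rfl⟩ := Nat.exists_eq_succ_of_ne_zero h.ne'; rfl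
  | succ k ih =>
    obtain ⟨j, rfl⟩ := Nat.exists_eq_succ_of_ne_zero (by omega : j ≠ 0)
    rw [pcoefRec_succ_succ, ih (by omega), ih (by omega), mul_zero, mul_zero, add_zero]

lemma sum_pcoefRec_succ_smul {M : Type*} [AddCommMonoid M] [Module R M] (k : ℕ) (X : ℕ → M) :
    ∑ j ∈ range (k + 2), pcoefRec q (k + 1) j • X j =
      ∑ j ∈ range (k + 1), (pcoefRec q k j * q ^ (2 * j)) • (X j + q • X (j + 1)) := by
  have hlast : ∑ j ∈ range (k + 1), (pcoefRec q k j * q ^ (2 * j)) • X j =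
      ∑ j ∈ range (k + 2), (pcoefRec q k j * q ^ (2 * j)) • X j := by
    rw [sum_range_succ _ (k + 1), pcoefRec_eq_zero_of_lt q (by omega), zero_mul, zero_smul,
      add_zero]
  simp only [smul_add, sum_add_distrib, smul_smul, hlast]
  rw [sum_range_succ' _ (k + 1), sum_range_succ' _ (k + 1)]
  simp only [pcoefRec_succ_succ, add_smul, sum_add_distrib, pcoefRec_zero_right, pow_zero,
    mul_zero, mul_one]
  have hshift : ∀ j, q ^ (2 * j + 1) * pcoefRec q k j = pcoefRec q k j * q ^ (2 * j) * q :=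
    fun j => by ring
  simp only [hshift, mul_comm (q ^ (2 * _)) (pcoefRec q k _)]
  abel

end Coefficients

lemma pcoef_succ_succ {q : ℂ} {k j : ℕ} (hjk : j < k)
    (hq : ∀ s ∈ Icc 1 (k - j), q ^ (2 * s) ≠ 1) :
    pcoef q (k + 1) (j + 1) =
      q ^ (2 * (j + 1)) * pcoef q k (j + 1) + q ^ (2 * j + 1) * pcoef q k j := by
  obtain ⟨m, rfl⟩ : ∃ m, k = j + m + 1 := ⟨k - j - 1, by omega⟩
  have hD : ∏ s ∈ Icc 1 m, (q ^ (2 * s) - 1) ≠ 0 :=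
    prod_ne_zero_iff.2 fun s hs => sub_ne_zero.2 (hq s (by simp only [mem_Icc] at hs ⊢; omega))
  have hE : q ^ (2 * (m + 1)) - 1 ≠ 0 :=
    sub_ne_zero.2 (hq (m + 1) (by simp only [mem_Icc]; omega))
  have hbot : ∏ r ∈ Icc (j + 1) (j + m + 1), (q ^ (2 * r) - 1) =
      (q ^ (2 * (j + 1)) - 1) * ∏ r ∈ Icc (j + 1 + 1) (j + m + 1), (q ^ (2 * r) - 1) := by
    rw [Icc_eq_cons_Ioc (by omega), prod_cons, ← Icc_add_one_left_eq_Ioc]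
  simp only [pcoef, show j + m + 1 + 1 - (j + 1) = m + 1 by omega,
    show j + m + 1 - (j + 1) = m by omega, show j + m + 1 - j = m + 1 by omega,
    prod_Icc_succ_top (show 1 ≤ m + 1 by omega),
    prod_Icc_succ_top (show j + 1 + 1 ≤ j + m + 1 + 1 by omega), hbot]
  field_simp
  ring

lemma pcoef_zero_right {q : ℂ} {k : ℕ} (hq : ∀ s ∈ Icc 1 k, q ^ (2 * s) ≠ 1) :
    pcoef q k 0 = 1 := by
  simp only [pcoef, zero_add, Nat.sub_zero, zero_pow two_ne_zero, pow_zero, one_mul]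
  exact div_self (prod_ne_zero_iff.2 fun s hs => sub_ne_zero.2 (hq s hs))

lemma pcoef_self (q : ℂ) (k : ℕ) : pcoef q k k = q ^ (k ^ 2) := by
  simp [pcoef]

lemma pcoef_eq_pcoefRec {q : ℂ} {k j : ℕ} (hjk : j ≤ k)
    (hq : ∀ s ∈ Icc 1 (k - j), q ^ (2 * s) ≠ 1) : pcoef q k j = pcoefRec q k j := by
  induction k generalizing j with
  | zero =>
    obtain rfl : j = 0 := by omega
    exact pcoef_zero_right hq
  | succ k ih =>
    obtain _ | j := j
    · exact pcoef_zero_right hq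
    rw [pcoefRec_succ_succ]
    obtain rfl | hjk' := eq_or_lt_of_le (Nat.le_of_succ_le_succ hjk)
    · rw [pcoefRec_eq_zero_of_lt q (by omega), ← ih le_rfl (by simp), pcoef_self, pcoef_self]
      ring
    have hq' : ∀ s ∈ Icc 1 (k - j), q ^ (2 * s) ≠ 1 := by simpa using hq
    rw [pcoef_succ_succ hjk' hq', ih hjk'.le hq',
      ih hjk' fun s hs => hq' s (by simp only [mem_Icc] at hs ⊢; omega)]

theorem mul_pow_eq_smul_pow_mul {R A : Type*} [CommSemiring R] [Semiring A] [Algebra R A]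
    {q : R} {x y : A} (h : x * y = q • (y * x)) (n : ℕ) : x * y ^ n = q ^ n • (y ^ n * x) := by
  induction n with
  | zero => simp
  | succ n ih =>
    rw [pow_succ, ← mul_assoc, ih, smul_mul_assoc, mul_assoc, h, mul_smul_comm, smul_smul,
      ← pow_succ, ← mul_assoc, ← pow_succ]

section Relations

variable (q : ℂ)

lemma aq_mul_bq : aq q * bq q = q • (bq q * aq q) := by
  simpa [aq, bq] using RingQuot.mkAlgHom_rel ℂ (SLqRel.ab (q := q))

lemma aq_mul_cq : aq q * cq q = q • (cq q * aq q) := by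
  simpa [aq, cq] using RingQuot.mkAlgHom_rel ℂ (SLqRel.ac (q := q))

lemma commute_bq_cq : Commute (bq q) (cq q) := by
  unfold Commute SemiconjBy
  simpa [bq, cq] using RingQuot.mkAlgHom_rel ℂ (SLqRel.bc (q := q))

lemma aq_mul_dq : aq q * dq q = 1 + q • (bq q * cq q) := by
  have h := RingQuot.mkAlgHom_rel ℂ (SLqRel.det (q := q))
  simp only [map_sub, map_mul, map_smul, map_one] at h
  rw [← h]
  simp [aq, bq, cq, dq]

lemma aq_mul_bq_pow_mul_cq_pow (m n : ℕ) :
    aq q * (bq q ^ m * cq q ^ n) = q ^ (m + n) • (bq q ^ m * cq q ^ n * aq q) := by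
  rw [← mul_assoc, mul_pow_eq_smul_pow_mul (aq_mul_bq q), smul_mul_assoc, mul_assoc,
    mul_pow_eq_smul_pow_mul (aq_mul_cq q), mul_smul_comm, smul_smul, ← pow_add, ← mul_assoc]

lemma aq_pow_succ_mul_dq (i m n : ℕ) :
    aq q ^ (i + 1) * bq q ^ m * cq q ^ n * dq q =
      q ^ (m + n) • (aq q ^ i * bq q ^ m * cq q ^ n +
        q • (aq q ^ i * bq q ^ (m + 1) * cq q ^ (n + 1))) := by
  have hbc : bq q ^ m * cq q ^ n * (bq q * cq q) = bq q ^ (m + 1) * cq q ^ (n + 1) := by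
    calc bq q ^ m * cq q ^ n * (bq q * cq q) = bq q ^ m * (cq q ^ n * bq q) * cq q := by
          simp only [mul_assoc]
      _ = bq q ^ m * (bq q * cq q ^ n) * cq q := by rw [((commute_bq_cq q).pow_right n).eq]
      _ = _ := by simp only [pow_succ, mul_assoc]
  calc aq q ^ (i + 1) * bq q ^ m * cq q ^ n * dq q
      = aq q ^ i * (aq q * (bq q ^ m * cq q ^ n)) * dq q := by simp only [pow_succ, mul_assoc]
    _ = q ^ (m + n) • (aq q ^ i * (bq q ^ m * cq q ^ n * (aq q * dq q))) := by
      rw [aq_mul_bq_pow_mul_cq_pow, mul_smul_comm, smul_mul_assoc]; simp only [mul_assoc]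
    _ = _ := by
      rw [aq_mul_dq, mul_add, mul_one, mul_smul_comm, hbc, mul_add, mul_smul_comm]
      simp only [mul_assoc]

theorem aq_pow_mul_dq_pow {N k : ℕ} (hk : k ≤ N) (r s : ℕ) :
    aq q ^ N * (bq q ^ r * cq q ^ s * dq q ^ k) =
      q ^ (k * (r + s)) • ∑ j ∈ range (k + 1),
        pcoefRec q k j • (aq q ^ (N - k) * bq q ^ (r + j) * cq q ^ (s + j)) := by
  induction k with
  | zero => simp [mul_assoc]
  | succ k ih =>
    have hN : N - k = N - (k + 1) + 1 := by omega
    have hstep : ∀ j, aq q ^ (N - k) * bq q ^ (r + j) * cq q ^ (s + j) * dq q =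
        q ^ (r + s) • q ^ (2 * j) • (aq q ^ (N - (k + 1)) * bq q ^ (r + j) * cq q ^ (s + j) +
          q • (aq q ^ (N - (k + 1)) * bq q ^ (r + (j + 1)) * cq q ^ (s + (j + 1)))) := by
      intro j
      rw [hN, aq_pow_succ_mul_dq, smul_smul, ← pow_add]
      congr 2; ring
    rw [pow_succ, ← mul_assoc, ← mul_assoc, mul_assoc _ _ (dq q ^ k), ih (by omega),
      smul_mul_assoc, sum_mul, sum_pcoefRec_succ_smul q k, add_one_mul, pow_add, mul_smul]
    congr 1
    rw [smul_sum]
    refine sum_congr rfl fun j _ => ?_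
    rw [smul_mul_assoc, hstep, mul_smul, smul_comm (pcoefRec q k j)]

end Relations

lemma IsPrimitiveRoot.pow_two_mul_ne_one {M : Type*} [CommMonoid M] {q : M} {l : ℕ}
    (hq : IsPrimitiveRoot q l) (hl : Odd l) {s : ℕ} (hs₀ : s ≠ 0) (hsl : s < l) : q ^ (2 * s) ≠ 1 := by
  rw [pow_mul]
  exact (hq.pow_of_coprime 2 (Nat.coprime_two_left.2 hl)).pow_ne_one_of_pos_of_lt hs₀ hsl

/-- For `q` a primitive `l`-th root of unity, `l` odd, and `0 ≤ k ≤ l`: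
`a^(l-k) b^r c^s = q^(-k(r+s)) α b^r c^s d^k - Σ_{j=1}^k p_{k,j}(q) a^(l-k) b^(r+j) c^(s+j)`,
where `α = a^l` is central. -/
theorem stmt12 (q : ℂ) (l : ℕ) (hq : IsPrimitiveRoot q l) (hl : Odd l)
    (k r s : ℕ) (hk : k ≤ l) :
    aq q ^ (l - k) * bq q ^ r * cq q ^ s =
      (q ^ (-(k * (r + s) : ℤ))) • (aq q ^ l * (bq q ^ r * cq q ^ s * dq q ^ k)) -
        ∑ j ∈ Finset.Icc 1 k,
          pcoef q k j • (aq q ^ (l - k) * bq q ^ (r + j) * cq q ^ (s + j)) := by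
  have hq₀ : q ≠ 0 := hq.ne_zero (by rintro rfl; exact Nat.not_odd_zero hl)
  have hsum : ∑ j ∈ Icc 1 k, pcoef q k j • (aq q ^ (l - k) * bq q ^ (r + j) * cq q ^ (s + j)) =
      ∑ j ∈ Icc 1 k, pcoefRec q k j • (aq q ^ (l - k) * bq q ^ (r + j) * cq q ^ (s + j)) := by
    refine sum_congr rfl fun j hj => ?_
    rw [pcoef_eq_pcoefRec (mem_Icc.1 hj).2 fun t ht =>
      hq.pow_two_mul_ne_one hl (by simp only [mem_Icc] at ht; omega)
        (by simp only [mem_Icc] at hj ht; omega)]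
  rw [eq_sub_iff_add_eq, hsum, aq_pow_mul_dq_pow q hk, sum_range_eq_add_Ico _ (by omega),
    Ico_add_one_right_eq_Icc, smul_smul, ← zpow_natCast, ← zpow_add₀ hq₀]
  simp
end
end

section
/- Let q be a primitive l-th root of unity with l odd. In the localization of A(SL_q(2)) at the central element α = a^l, the element a is invertible with inverse a^{-1} = α^{-1} a^{l-1}, and the localized module over A(SL(2))[α^{-1}] is free with basis the l^3 monomials a^{r_a} b^{r_b} c^{r_c}, 0 ≤ r_a, r_b, r_c ≤ l-1. -/
noncomputable section
open scoped TensorProduct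

/-!
For `q ^ l = 1` the elements `a ^ l`, `b ^ l`, `c ^ l` are central: the generators `q`-commute,
and the factor picked up by an `l`-th power is `q ^ l = 1` (for `a ^ l` against `d` the correction
term of `a ^ n d = d a ^ n + q⁻¹ (q ^ 2n - 1) bc a ^ (n - 1)` vanishes at `n = l`). Moving `a`
through polynomials in `bc` gives `a ^ n d ^ n = ∏_{r < n} (1 + q ^ (2r+1) bc)`, which for a
primitive root of odd order `l` equals `1 + (bc) ^ l`. So in the localization
`d ^ l = α⁻¹ (1 + b ^ l c ^ l)`, and the subalgebra `S` generated by the `l`-th powers and `α⁻¹`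
is central.

Spanning: `a`, `b`, `c` send a monomial `a ^ i b ^ j c ^ k` to a scalar multiple of a monomial,
an exponent reaching `l` is absorbed into `S`, and `d = α⁻¹ a ^ (l - 1) (1 + q bc)`.

Independence: a relation with coefficients in `S` becomes, after multiplying by a power of `α`
and using that `ker φ` is `α`-torsion, a relation `∑ t_v a^{v₁} b^{v₂} c^{v₃} = 0` in
`A(SL_q(2))` with each `t_v` in the span of the monomials with exponents divisible by `l`. The
monomials `a ^ i b ^ j c ^ k` are linearly independent, as one sees on the representation by
weighted shifts on the span of the symbols `a ^ x b ^ y c ^ z`, `x ∈ ℤ`.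
-/

section QCommute

variable {K A : Type*} [CommSemiring K] [Semiring A] [Algebra K A] {t : K} {x y : A}

theorem pow_mul_eq_smul_mul_pow (h : x * y = t • (y * x)) (n : ℕ) :
    x ^ n * y = t ^ n • (y * x ^ n) := by
  induction n with
  | zero => simp
  | succ n ih =>
    rw [pow_succ', mul_assoc, ih, mul_smul_comm, ← mul_assoc, h, smul_mul_assoc, smul_smul,
      mul_assoc, ← pow_succ', ← pow_succ]

theorem mul_pow_eq_smul_pow_mul_s15 (h : x * y = t • (y * x)) (n : ℕ) :
    x * y ^ n = t ^ n • (y ^ n * x) := by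
  induction n with
  | zero => simp
  | succ n ih =>
    rw [pow_succ, ← mul_assoc, ih, smul_mul_assoc, mul_assoc, h, mul_smul_comm, smul_smul,
      ← mul_assoc, ← pow_succ, ← pow_succ]

theorem commute_pow_left_of_mul_eq_smul (h : x * y = t • (y * x)) {n : ℕ} (ht : t ^ n = 1) :
    Commute (x ^ n) y := by
  rw [Commute, SemiconjBy, pow_mul_eq_smul_mul_pow h, ht, one_smul]

theorem commute_pow_right_of_mul_eq_smul (h : x * y = t • (y * x)) {n : ℕ} (ht : t ^ n = 1) :
    Commute x (y ^ n) := by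
  rw [Commute, SemiconjBy, mul_pow_eq_smul_pow_mul_s15 h, ht, one_smul]

end QCommute

theorem Finsupp.linearCombination_mul_right {K A κ : Type*} [CommSemiring K] [Semiring A]
    [Algebra K A] (x : κ → A) (c : A) (f : κ →₀ K) :
    linearCombination K (fun k => x k * c) f = linearCombination K x f * c := by
  simp only [linearCombination_apply, Finsupp.sum_mul, smul_mul_assoc]

theorem eq_zero_of_sum_mul_eq_zero {K A ι κ : Type*} [CommRing K] [Ring A] [Algebra K A]
    [Fintype ι] {x : κ → A} {y : ι → A} (hxy : LinearIndependent K fun p : ι × κ => x p.2 * y p.1)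
    {t : ι → A} (ht : ∀ i, t i ∈ Submodule.span K (Set.range x)) (hsum : ∑ i, t i * y i = 0)
    (i : ι) : t i = 0 := by
  classical
  simp only [← Finsupp.range_linearCombination, LinearMap.mem_range] at ht
  choose f hf using ht
  set F : ι × κ →₀ K := ∑ j, (f j).mapDomain (Prod.mk j)
  have hF : F = 0 := by
    refine linearIndependent_iff.1 hxy F ?_
    simp only [F, map_sum, Finsupp.linearCombination_mapDomain, Function.comp_def,
      Finsupp.linearCombination_mul_right, hf, hsum]
  have hfi : f i = 0 := by
    ext k
    have hik := congr($hF (i, k))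
    rw [Finsupp.finsetSum_apply, Finset.sum_eq_single i (fun j _ hj =>
      Finsupp.mapDomain_of_notMem_range _ _ fun ⟨_, h⟩ => hj (congrArg Prod.fst h))
      (absurd (Finset.mem_univ i)), Finsupp.mapDomain_apply (Prod.mk_right_injective i)] at hik
    exact hik
  rw [← hf i, hfi, map_zero]

theorem Submodule.mul_mem_span_range_of_le_center {K R ι : Type*} [CommSemiring K] [Semiring R]
    [Algebra K R] {S : Subalgebra K R} (hS : S ≤ Subalgebra.center K R) {f : ι → R} {z : R}
    (hz : ∀ i, z * f i ∈ span S (Set.range f)) {y : R} (hy : y ∈ span S (Set.range f)) :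
    z * y ∈ span S (Set.range f) := by
  induction hy using Submodule.span_induction with
  | mem y hy => obtain ⟨i, rfl⟩ := hy; exact hz i
  | zero => rw [mul_zero]; exact zero_mem _
  | add x y _ _ hx hy => rw [mul_add]; exact add_mem hx hy
  | smul s y _ hy =>
    have hzs : z * (s • y) = s • (z * y) := by
      change z * ((s : R) * y) = (s : R) * (z * y)
      rw [← mul_assoc, Subalgebra.mem_center_iff.1 (hS s.2) z, mul_assoc]
    rw [hzs]
    exact smul_mem _ s hy

structure IsLocalizationAtPow {K A R : Type*} [CommSemiring K] [Semiring A] [Semiring R]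
    [Algebra K A] [Algebra K R] (φ : A →ₐ[K] R) (z : A) (u : R) : Prop where
  map_mul_inv : φ z * u = 1
  inv_mul_map : u * φ z = 1
  surj : ∀ y : R, ∃ (x : A) (n : ℕ), y = φ x * u ^ n
  ker : ∀ x : A, φ x = 0 → ∃ n : ℕ, x * z ^ n = 0

namespace IsLocalizationAtPow

variable {K A R : Type*} [CommSemiring K] [Semiring A] [Semiring R] [Algebra K A] [Algebra K R]
  {φ : A →ₐ[K] R} {z : A} {u : R}

theorem isUnit (h : IsLocalizationAtPow φ z u) : IsUnit (φ z) :=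
  ⟨⟨φ z, u, h.map_mul_inv, h.inv_mul_map⟩, rfl⟩

theorem mem_center (h : IsLocalizationAtPow φ z u) {c : R} (hφ : ∀ x, Commute c (φ x))
    (hu : Commute c u) : c ∈ Subalgebra.center K R := by
  refine Subalgebra.mem_center_iff.2 fun y => ?_
  obtain ⟨x, n, rfl⟩ := h.surj y
  exact ((hφ x).mul_right (hu.pow_right n)).eq.symm

theorem inv_mem_center (h : IsLocalizationAtPow φ z u) (hz : z ∈ Subalgebra.center K A) :
    u ∈ Subalgebra.center K R := by
  let : Invertible (φ z) := ⟨u, h.inv_mul_map, h.map_mul_inv⟩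
  exact h.mem_center (fun x => (Commute.map (Subalgebra.mem_center_iff.1 hz x).symm φ).invOf_left)
    (.refl u)

theorem map_mem_center (h : IsLocalizationAtPow φ z u) (hz : z ∈ Subalgebra.center K A) {w : A}
    (hw : w ∈ Subalgebra.center K A) : φ w ∈ Subalgebra.center K R :=
  h.mem_center (fun x => Commute.map (Subalgebra.mem_center_iff.1 hw x).symm φ)
    (Subalgebra.mem_center_iff.1 (h.inv_mem_center hz) (φ w))

end IsLocalizationAtPow

namespace SLq

variable {q : ℂ} {l : ℕ}

theorem a_mul_b : aq q * bq q = q • (bq q * aq q) := by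
  simpa only [aq, bq, map_mul, map_smul] using RingQuot.mkAlgHom_rel ℂ (SLqRel.ab (q := q))

theorem a_mul_c : aq q * cq q = q • (cq q * aq q) := by
  simpa only [aq, cq, map_mul, map_smul] using RingQuot.mkAlgHom_rel ℂ (SLqRel.ac (q := q))

theorem b_mul_d : bq q * dq q = q • (dq q * bq q) := by
  simpa only [bq, dq, map_mul, map_smul] using RingQuot.mkAlgHom_rel ℂ (SLqRel.bd (q := q))

theorem commute_b_c : Commute (bq q) (cq q) :=
  show bq q * cq q = cq q * bq q by
    simpa only [bq, cq, map_mul] using RingQuot.mkAlgHom_rel ℂ (SLqRel.bc (q := q))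

theorem c_mul_d : cq q * dq q = q • (dq q * cq q) := by
  simpa only [cq, dq, map_mul, map_smul] using RingQuot.mkAlgHom_rel ℂ (SLqRel.cd (q := q))

theorem a_mul_d_eq_d_mul_a_add : aq q * dq q = dq q * aq q + (q - q⁻¹) • (bq q * cq q) := by
  rw [← sub_eq_iff_eq_add']
  simpa only [aq, bq, cq, dq, map_mul, map_smul, map_sub] using
    RingQuot.mkAlgHom_rel ℂ (SLqRel.ad (q := q))

theorem a_mul_d : aq q * dq q = 1 + q • (bq q * cq q) := by
  rw [← sub_eq_iff_eq_add]
  simpa only [aq, bq, cq, dq, map_mul, map_smul, map_sub, map_one] using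
    RingQuot.mkAlgHom_rel ℂ (SLqRel.det (q := q))

theorem a_mul_bc : aq q * (bq q * cq q) = q ^ 2 • (bq q * cq q * aq q) := by
  rw [← mul_assoc, a_mul_b, smul_mul_assoc, mul_assoc, a_mul_c, mul_smul_comm, smul_smul,
    ← mul_assoc, sq]

theorem b_mul_a_pow (hq0 : q ≠ 0) (n : ℕ) : bq q * aq q ^ n = (q ^ n)⁻¹ • (aq q ^ n * bq q) := by
  rw [pow_mul_eq_smul_mul_pow a_mul_b, inv_smul_smul₀ (pow_ne_zero n hq0)]

theorem c_mul_a_pow (hq0 : q ≠ 0) (n : ℕ) : cq q * aq q ^ n = (q ^ n)⁻¹ • (aq q ^ n * cq q) := by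
  rw [pow_mul_eq_smul_mul_pow a_mul_c, inv_smul_smul₀ (pow_ne_zero n hq0)]

@[elab_as_elim]
theorem induction_on {motive : ASLq q → Prop} (x : ASLq q)
    (algebraMap : ∀ r : ℂ, motive (algebraMap ℂ (ASLq q) r)) (a : motive (aq q))
    (b : motive (bq q)) (c : motive (cq q)) (d : motive (dq q))
    (add : ∀ x y, motive x → motive y → motive (x + y))
    (mul : ∀ x y, motive x → motive y → motive (x * y)) : motive x := by
  obtain ⟨x, rfl⟩ := RingQuot.mkAlgHom_surjective ℂ (SLqRel q) x
  induction x using FreeAlgebra.induction with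
  | grade0 r => simpa only [AlgHom.commutes] using algebraMap r
  | grade1 i => fin_cases i <;> assumption
  | mul x y hx hy => simpa only [map_mul] using mul _ _ hx hy
  | add x y hx hy => simpa only [map_add] using add _ _ hx hy

theorem mem_center_of_commute {z : ASLq q} (ha : Commute z (aq q)) (hb : Commute z (bq q))
    (hc : Commute z (cq q)) (hd : Commute z (dq q)) : z ∈ Subalgebra.center ℂ (ASLq q) := by
  refine Subalgebra.mem_center_iff.2 fun x => ?_
  induction x using induction_on with
  | algebraMap r => exact Algebra.commutes r z
  | a => exact ha.eq.symm
  | b => exact hb.eq.symm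
  | c => exact hc.eq.symm
  | d => exact hd.eq.symm
  | add x y hx hy => rw [add_mul, mul_add, hx, hy]
  | mul x y hx hy => rw [mul_assoc, hy, ← mul_assoc, hx, mul_assoc]

theorem b_pow_mem_center (hql : q ^ l = 1) : bq q ^ l ∈ Subalgebra.center ℂ (ASLq q) :=
  mem_center_of_commute (commute_pow_right_of_mul_eq_smul a_mul_b hql).symm (.pow_left rfl l)
    (commute_b_c.pow_left l) (commute_pow_left_of_mul_eq_smul b_mul_d hql)

theorem c_pow_mem_center (hql : q ^ l = 1) : cq q ^ l ∈ Subalgebra.center ℂ (ASLq q) :=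
  mem_center_of_commute (commute_pow_right_of_mul_eq_smul a_mul_c hql).symm
    (commute_b_c.pow_right l).symm (.pow_left rfl l) (commute_pow_left_of_mul_eq_smul c_mul_d hql)

theorem a_pow_succ_mul_d (hq0 : q ≠ 0) (n : ℕ) :
    aq q ^ (n + 1) * dq q =
      dq q * aq q ^ (n + 1) + (q⁻¹ * (q ^ (2 * (n + 1)) - 1)) • (bq q * cq q * aq q ^ n) := by
  induction n with
  | zero =>
    rw [pow_one, pow_zero, mul_one, a_mul_d_eq_d_mul_a_add]
    congr 2
    field_simp
  | succ n ih =>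
    have habc : aq q * (bq q * cq q * aq q ^ n) = q ^ 2 • (bq q * cq q * aq q ^ (n + 1)) := by
      rw [← mul_assoc, a_mul_bc, smul_mul_assoc, mul_assoc, ← pow_succ']
    have had : aq q * (dq q * aq q ^ (n + 1)) =
        dq q * aq q ^ (n + 1 + 1) + (q - q⁻¹) • (bq q * cq q * aq q ^ (n + 1)) := by
      rw [← mul_assoc, a_mul_d_eq_d_mul_a_add, add_mul, smul_mul_assoc, mul_assoc, ← pow_succ']
    rw [show aq q ^ (n + 1 + 1) * dq q = aq q * (aq q ^ (n + 1) * dq q) by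
      rw [pow_succ', mul_assoc], ih, mul_add, had, mul_smul_comm, habc, smul_smul, add_assoc,
      ← add_smul]
    congr 2
    field_simp
    ring

theorem a_pow_mem_center (hql : q ^ l = 1) (hl : 0 < l) :
    aq q ^ l ∈ Subalgebra.center ℂ (ASLq q) := by
  have hq0 : q ≠ 0 := (IsUnit.of_pow_eq_one hql hl.ne').ne_zero
  refine mem_center_of_commute (.pow_left rfl _) (commute_pow_left_of_mul_eq_smul a_mul_b hql)
    (commute_pow_left_of_mul_eq_smul a_mul_c hql) ?_
  obtain ⟨n, rfl⟩ : ∃ n, l = n + 1 := ⟨l - 1, by omega⟩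
  rw [Commute, SemiconjBy, a_pow_succ_mul_d hq0, pow_mul', hql, one_pow, sub_self, mul_zero,
    zero_smul, add_zero]

section PowerProduct

open Polynomial

theorem a_mul_aeval_bc (p : ℂ[X]) :
    aq q * aeval (bq q * cq q) p = aeval (bq q * cq q) (p.comp (C (q ^ 2) * X)) * aq q := by
  induction p using Polynomial.induction_on' with
  | add p r hp hr => rw [map_add, mul_add, add_comp, map_add, add_mul, hp, hr]
  | monomial n c =>
    rw [monomial_comp, mul_pow, ← C_pow, ← mul_assoc, ← C_mul, C_mul_X_pow_eq_monomial,
      aeval_monomial, aeval_monomial, ← Algebra.smul_def, ← Algebra.smul_def, mul_smul_comm,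
      mul_pow_eq_smul_pow_mul_s15 a_mul_bc, smul_mul_assoc, smul_smul, ← pow_mul, mul_comm]

theorem a_pow_mul_d_pow (n : ℕ) :
    aq q ^ n * dq q ^ n =
      aeval (bq q * cq q) (∏ r ∈ Finset.range n, (1 + C (q ^ (2 * r + 1)) * X)) := by
  induction n with
  | zero => simp
  | succ n ih =>
    have hfac (r : ℕ) : (1 + C (q ^ (2 * r + 1)) * X).comp (C (q ^ 2) * X) =
        1 + C (q ^ (2 * (r + 1) + 1)) * X := by
      simp only [add_comp, one_comp, mul_comp, C_comp, X_comp, ← mul_assoc, ← C_mul, ← pow_add]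
      ring_nf
    rw [pow_succ', pow_succ, mul_assoc, ← mul_assoc (aq q ^ n), ih, ← mul_assoc, a_mul_aeval_bc,
      mul_assoc, a_mul_d, prod_comp, Finset.prod_range_succ', map_mul]
    simp only [hfac]
    simp [Algebra.smul_def]

theorem prod_range_one_add_C_mul_X (hq : IsPrimitiveRoot q l) (hl : Odd l) :
    ∏ r ∈ Finset.range l, (1 + C (q ^ (2 * r + 1)) * X : ℂ[X]) = 1 + X ^ l := by
  have hC : IsPrimitiveRoot (C q) l := hq.map_of_injective C_injective
  have hC2 : IsPrimitiveRoot (C (q ^ 2)) l :=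
    (hq.pow_of_coprime 2 hl.coprime_two_left).map_of_injective C_injective
  have h := hC.pow_add_pow_eq_prod_add_mul 1 X hl
  rw [one_pow] at h
  rw [h, nthRootsFinset_def, ← Multiset.toFinset_eq hC.nthRoots_one_nodup,
    Finset.prod_eq_multiset_prod, Finset.prod_eq_multiset_prod]
  dsimp only
  rw [hC2.nthRoots_eq (α := C q) (by rw [← C_pow, hq.pow_eq_one, C_1]), Multiset.map_map]
  simp [pow_succ, pow_mul]

theorem a_pow_mul_d_pow_eq_one_add (hq : IsPrimitiveRoot q l) (hl : Odd l) :
    aq q ^ l * dq q ^ l = 1 + bq q ^ l * cq q ^ l := by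
  rw [a_pow_mul_d_pow, prod_range_one_add_C_mul_X hq hl, map_add, map_one, map_pow, aeval_X,
    commute_b_c.mul_pow]

end PowerProduct

def mon (q : ℂ) (w : ℕ × ℕ × ℕ) : ASLq q := aq q ^ w.1 * bq q ^ w.2.1 * cq q ^ w.2.2

theorem a_mul_mon (w : ℕ × ℕ × ℕ) : aq q * mon q w = mon q (w + (1, 0, 0)) := by
  simp only [mon, Prod.fst_add, Prod.snd_add, add_zero, pow_succ', mul_assoc]

theorem b_mul_mon (hq0 : q ≠ 0) (w : ℕ × ℕ × ℕ) :
    bq q * mon q w = (q ^ w.1)⁻¹ • mon q (w + (0, 1, 0)) := by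
  simp only [mon, Prod.fst_add, Prod.snd_add, add_zero, pow_succ', ← mul_assoc, b_mul_a_pow hq0,
    smul_mul_assoc]

theorem c_mul_mon (hq0 : q ≠ 0) (w : ℕ × ℕ × ℕ) :
    cq q * mon q w = (q ^ w.1)⁻¹ • mon q (w + (0, 0, 1)) := by
  simp only [mon, Prod.fst_add, Prod.snd_add, add_zero, pow_succ']
  rw [← mul_assoc, ← mul_assoc, c_mul_a_pow hq0, smul_mul_assoc, smul_mul_assoc,
    mul_assoc (aq q ^ _), ← (commute_b_c.pow_left _).eq]
  simp only [mul_assoc]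

section Representation

open Finsupp

abbrev LaurentModule : Type := (ℤ × ℕ × ℕ) →₀ ℂ

def weightedShift (f : ℤ × ℕ × ℕ → ℂ) (g : ℤ × ℕ × ℕ → ℤ × ℕ × ℕ) :
    Module.End ℂ LaurentModule :=
  linearCombination ℂ fun p => single (g p) (f p)

@[simp]
theorem weightedShift_single (f : ℤ × ℕ × ℕ → ℂ) (g : ℤ × ℕ × ℕ → ℤ × ℕ × ℕ)
    (p : ℤ × ℕ × ℕ) (c : ℂ) : weightedShift f g (single p c) = single (g p) (c * f p) := by
  rw [weightedShift, linearCombination_single, smul_single, smul_eq_mul]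

/-- The basis vector `single (x, y, z) 1` stands for `a^x b^y c^z` in `A(SL_q(2))[a⁻¹]`, on which
`b` and `c` act through `b a^x = q^{-x} a^x b`, and `d` as `a⁻¹ (1 + q b c)`. -/
def repGen (q : ℂ) : Fin 4 → Module.End ℂ LaurentModule :=
  ![weightedShift (fun _ => 1) (· + (1, 0, 0)),
    weightedShift (fun p => q ^ (-p.1)) (· + (0, 1, 0)),
    weightedShift (fun p => q ^ (-p.1)) (· + (0, 0, 1)),
    weightedShift (fun _ => 1) (fun p => (p.1 - 1, p.2.1, p.2.2)) +
      weightedShift (fun p => q ^ (1 - 2 * p.1)) (fun p => (p.1 - 1, p.2.1 + 1, p.2.2 + 1))]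

theorem repGen_rel (hq0 : q ≠ 0) ⦃x y : FreeSL⦄ (h : SLqRel q x y) :
    FreeAlgebra.lift ℂ (repGen q) x = FreeAlgebra.lift ℂ (repGen q) y := by
  refine lhom_ext fun ⟨x, y, z⟩ c => ?_
  cases h <;>
    simp only [Fa, Fb, Fc, Fd, map_mul, map_smul, map_sub, map_one, FreeAlgebra.lift_ι_apply,
      repGen, Matrix.cons_val, Module.End.mul_apply, LinearMap.add_apply, LinearMap.smul_apply,
      LinearMap.sub_apply, Module.End.one_apply, weightedShift_single, map_add, smul_single,
      smul_eq_mul, Prod.mk_add_mk, add_zero, sub_add_cancel, add_sub_cancel_right]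
  case det =>
    rw [show c * q ^ (1 - 2 * x) * 1 = q * (c * q ^ (-x) * q ^ (-x)) by
      rw [show 1 - 2 * x = 1 + -x + -x by ring, zpow_add₀ hq0, zpow_add₀ hq0, zpow_one]; ring,
      add_sub_cancel_right, mul_one, mul_one]
  all_goals
    try simp only [add_sub_add_left_eq_sub, smul_add, smul_single, smul_eq_mul, ← single_sub]
  all_goals
    simp only [two_mul, mul_add, zpow_add₀ hq0, zpow_sub₀ hq0, zpow_neg, zpow_one]
  case ab | ac | ad => congr 1; field_simp
  case bd | cd => congr 2 <;> field_simp

theorem weightedShift_pow_single {f : ℤ × ℕ × ℕ → ℂ} {δ p : ℤ × ℕ × ℕ}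
    (hf : ∀ k : ℕ, f (p + k • δ) = 1) (n : ℕ) (c : ℂ) :
    (weightedShift f (· + δ) ^ n) (single p c) = single (p + n • δ) c := by
  induction n with
  | zero => simp
  | succ n ih =>
    rw [pow_succ', Module.End.mul_apply, ih, weightedShift_single, hf, mul_one, succ_nsmul,
      add_assoc]

def rep (hq0 : q ≠ 0) : ASLq q →ₐ[ℂ] Module.End ℂ LaurentModule :=
  RingQuot.liftAlgHom ℂ ⟨FreeAlgebra.lift ℂ (repGen q), repGen_rel hq0⟩

theorem rep_mon_single_zero (hq0 : q ≠ 0) (w : ℕ × ℕ × ℕ) :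
    rep hq0 (mon q w) (single 0 1) = single ((w.1 : ℤ), w.2.1, w.2.2) 1 := by
  obtain ⟨i, j, k⟩ := w
  simp only [rep, mon, aq, bq, cq, RingQuot.liftAlgHom_mkAlgHom_apply, map_mul, map_pow, Fa, Fb,
    Fc, FreeAlgebra.lift_ι_apply, repGen, Matrix.cons_val, Module.End.mul_apply]
  rw [weightedShift_pow_single (by simp), weightedShift_pow_single (by simp),
    weightedShift_pow_single (by simp)]
  simp

theorem linearIndependent_mon (hq0 : q ≠ 0) : LinearIndependent ℂ (mon q) := by
  refine LinearIndependent.of_comp ((LinearMap.applyₗ (single 0 1)).comp (rep hq0).toLinearMap) ?_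
  have : ((LinearMap.applyₗ (single 0 1)).comp (rep hq0).toLinearMap) ∘ mon q =
      (fun w : ℤ × ℕ × ℕ => single w (1 : ℂ)) ∘ fun w => ((w.1 : ℤ), w.2.1, w.2.2) := by
    ext w : 1
    simp [rep_mon_single_zero]
  rw [this]
  exact (linearIndependent_single_one _ _).comp _ fun w w' h => by
    simpa [Prod.ext_iff] using h

end Representation

def natTriple (v : Fin l × Fin l × Fin l) : ℕ × ℕ × ℕ := (v.1, v.2.1, v.2.2)

theorem mon_smul_add (hql : q ^ l = 1) (w v : ℕ × ℕ × ℕ) :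
    mon q (l • w + v) = mon q (l • w) * mon q v := by
  have hB (x : ASLq q) : Commute ((bq q ^ l) ^ w.2.1) x :=
    (Subalgebra.mem_center_iff.1 (pow_mem (b_pow_mem_center hql) _) x).symm
  have hC (x : ASLq q) : Commute ((cq q ^ l) ^ w.2.2) x :=
    (Subalgebra.mem_center_iff.1 (pow_mem (c_pow_mem_center hql) _) x).symm
  simp only [mon, Prod.smul_fst, Prod.smul_snd, Prod.fst_add, Prod.snd_add, smul_eq_mul,
    pow_add, pow_mul, mul_assoc]
  conv_rhs => rw [(hC _).left_comm, (hC _).left_comm, (hB _).left_comm]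

theorem linearIndependent_mon_smul_mul_mon (hq0 : q ≠ 0) (hql : q ^ l = 1) :
    LinearIndependent ℂ fun p : (Fin l × Fin l × Fin l) × (ℕ × ℕ × ℕ) =>
      mon q (l • p.2) * mon q (natTriple p.1) := by
  simp only [← mon_smul_add hql]
  refine (linearIndependent_mon hq0).comp _ ?_
  rintro ⟨⟨a, b, c⟩, ⟨i, j, k⟩⟩ ⟨⟨a', b', c'⟩, ⟨i', j', k'⟩⟩ h
  have : NeZero l := ⟨a.pos.ne'⟩
  have hdm {i i' : ℕ} {a a' : Fin l} (h : l * i + a = l * i' + a') : i = i' ∧ a = a' := by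
    simpa using (Nat.divModEquiv l).symm.injective (a₁ := (i, a)) (a₂ := (i', a'))
      (by simpa [mul_comm] using h)
  simp only [natTriple, Prod.smul_mk, smul_eq_mul, Prod.mk_add_mk, Prod.mk.injEq] at h
  obtain ⟨rfl, rfl⟩ := hdm h.1
  obtain ⟨rfl, rfl⟩ := hdm h.2.1
  obtain ⟨rfl, rfl⟩ := hdm h.2.2
  rfl

def powAdjoin (q : ℂ) (l : ℕ) : Subalgebra ℂ (ASLq q) :=
  Algebra.adjoin ℂ {aq q ^ l, bq q ^ l, cq q ^ l}

theorem powAdjoin_le_span (hql : q ^ l = 1) :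
    Subalgebra.toSubmodule (powAdjoin q l) ≤
      Submodule.span ℂ (Set.range fun w : ℕ × ℕ × ℕ => mon q (l • w)) := by
  rw [powAdjoin, Algebra.adjoin_eq_span]
  refine Submodule.span_mono fun x hx => ?_
  induction hx using Submonoid.closure_induction with
  | mem x hx =>
    rcases hx with rfl | rfl | rfl
    exacts [⟨(1, 0, 0), by simp [mon]⟩, ⟨(0, 1, 0), by simp [mon]⟩, ⟨(0, 0, 1), by simp [mon]⟩]
  | one => exact ⟨0, by simp [mon]⟩
  | mul x y _ _ hx hy =>
    obtain ⟨w, rfl⟩ := hx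
    obtain ⟨w', rfl⟩ := hy
    exact ⟨w + w', by dsimp only; rw [smul_add, mon_smul_add hql]⟩

theorem eq_zero_of_sum_mul_mon_eq_zero (hq0 : q ≠ 0) (hql : q ^ l = 1)
    {t : Fin l × Fin l × Fin l → ASLq q} (ht : ∀ v, t v ∈ powAdjoin q l)
    (hsum : ∑ v, t v * mon q (natTriple v) = 0) (v : Fin l × Fin l × Fin l) : t v = 0 :=
  eq_zero_of_sum_mul_eq_zero (x := fun w => mon q (l • w)) (y := fun v => mon q (natTriple v))
    (linearIndependent_mon_smul_mul_mon hq0 hql)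
    (fun v => powAdjoin_le_span hql (ht v)) hsum v

section Localization

open Filter Submodule

variable {R : Type*} [Ring R] [Algebra ℂ R] {φ : ASLq q →ₐ[ℂ] R} {u : R}

def localizedClassical (φ : ASLq q →ₐ[ℂ] R) (u : R) (l : ℕ) : Subalgebra ℂ R :=
  Algebra.adjoin ℂ {φ (aq q ^ l), φ (bq q ^ l), φ (cq q ^ l), φ (dq q ^ l), u}

def mapMon (φ : ASLq q →ₐ[ℂ] R) (l : ℕ) (v : Fin l × Fin l × Fin l) : R :=
  φ (aq q) ^ (v.1 : ℕ) * φ (bq q) ^ (v.2.1 : ℕ) * φ (cq q) ^ (v.2.2 : ℕ)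

theorem mapMon_eq (v : Fin l × Fin l × Fin l) : mapMon φ l v = φ (mon q (natTriple v)) := by
  simp only [mapMon, mon, natTriple, map_mul, map_pow]

theorem map_d_pow (hq : IsPrimitiveRoot q l) (hl : Odd l)
    (h : IsLocalizationAtPow φ (aq q ^ l) u) :
    φ (dq q ^ l) = u * φ (1 + bq q ^ l * cq q ^ l) := by
  rw [← a_pow_mul_d_pow_eq_one_add hq hl, map_mul, ← mul_assoc, h.inv_mul_map, one_mul]

theorem localizedClassical_le_center (hq : IsPrimitiveRoot q l) (hl : Odd l)
    (h : IsLocalizationAtPow φ (aq q ^ l) u) :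
    localizedClassical φ u l ≤ Subalgebra.center ℂ R := by
  have ha := a_pow_mem_center hq.pow_eq_one hl.pos
  have hb := b_pow_mem_center hq.pow_eq_one
  have hc := c_pow_mem_center hq.pow_eq_one
  refine Algebra.adjoin_le ?_
  rintro _ (rfl | rfl | rfl | rfl | rfl)
  · exact h.map_mem_center ha ha
  · exact h.map_mem_center ha hb
  · exact h.map_mem_center ha hc
  · rw [SetLike.mem_coe, map_d_pow hq hl h]
    exact mul_mem (h.inv_mem_center ha)
      (h.map_mem_center ha (add_mem (one_mem _) (mul_mem hb hc)))
  · exact h.inv_mem_center ha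

theorem eventually_mul_pow_eq_map {s : R} {t : ASLq q} {N : ℕ} (ht : t ∈ powAdjoin q l)
    (hst : s * φ (aq q ^ l) ^ N = φ t) :
    ∀ᶠ M in atTop, ∃ t ∈ powAdjoin q l, s * φ (aq q ^ l) ^ M = φ t := by
  filter_upwards [eventually_ge_atTop N] with M hM
  obtain ⟨k, rfl⟩ := exists_add_of_le hM
  refine ⟨t * (aq q ^ l) ^ k, mul_mem ht (pow_mem (Algebra.subset_adjoin (by simp)) k), ?_⟩
  rw [pow_add, ← mul_assoc, hst, map_mul, map_pow φ (aq q ^ l)]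

theorem eventually_mul_pow_eq_map_of_mem (hq : IsPrimitiveRoot q l) (hl : Odd l)
    (h : IsLocalizationAtPow φ (aq q ^ l) u) {s : R} (hs : s ∈ localizedClassical φ u l) :
    ∀ᶠ N in atTop, ∃ t ∈ powAdjoin q l, s * φ (aq q ^ l) ^ N = φ t := by
  have hα := a_pow_mem_center hq.pow_eq_one hl.pos
  have ha : aq q ^ l ∈ powAdjoin q l := Algebra.subset_adjoin (by simp)
  have hb : bq q ^ l ∈ powAdjoin q l := Algebra.subset_adjoin (by simp)
  have hc : cq q ^ l ∈ powAdjoin q l := Algebra.subset_adjoin (by simp)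
  induction hs using Algebra.adjoin_induction with
  | mem x hx =>
    rcases hx with rfl | rfl | rfl | rfl | rfl
    · exact eventually_mul_pow_eq_map (N := 0) ha (by rw [pow_zero, mul_one])
    · exact eventually_mul_pow_eq_map (N := 0) hb (by rw [pow_zero, mul_one])
    · exact eventually_mul_pow_eq_map (N := 0) hc (by rw [pow_zero, mul_one])
    · refine eventually_mul_pow_eq_map (N := 1) (add_mem (one_mem _) (mul_mem hb hc)) ?_
      rw [pow_one, ← map_mul, Subalgebra.mem_center_iff.1 hα, a_pow_mul_d_pow_eq_one_add hq hl]
    · exact eventually_mul_pow_eq_map (N := 1) (one_mem _) (by rw [pow_one, h.inv_mul_map, map_one])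
  | algebraMap r =>
    exact eventually_mul_pow_eq_map (algebraMap_mem _ r)
      (by rw [pow_zero, mul_one, AlgHom.commutes])
  | add s s' _ _ hs hs' =>
    filter_upwards [hs, hs'] with N ⟨t, ht, hst⟩ ⟨t', ht', hst'⟩
    exact ⟨t + t', add_mem ht ht', by rw [add_mul, hst, hst', map_add]⟩
  | mul s s' _ _ hs hs' =>
    obtain ⟨N, t, ht, hst⟩ := hs.exists
    obtain ⟨N', t', ht', hst'⟩ := hs'.exists
    refine eventually_mul_pow_eq_map (N := N + N') (mul_mem ht ht') ?_
    rw [pow_add, mul_assoc, ← mul_assoc s',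
      Subalgebra.mem_center_iff.1 (pow_mem (h.map_mem_center hα hα) N) s', mul_assoc,
      ← mul_assoc, hst, hst', map_mul]

theorem linearIndependent_mapMon (hq : IsPrimitiveRoot q l) (hl : Odd l)
    (h : IsLocalizationAtPow φ (aq q ^ l) u) :
    LinearIndependent (localizedClassical φ u l) (mapMon φ l) := by
  have hα := a_pow_mem_center hq.pow_eq_one hl.pos
  have hcomm (n : ℕ) (x : R) : x * φ (aq q ^ l) ^ n = φ (aq q ^ l) ^ n * x :=
    Subalgebra.mem_center_iff.1 (pow_mem (h.map_mem_center hα hα) n) x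
  rw [Fintype.linearIndependent_iff]
  intro g hg v
  obtain ⟨N, hN⟩ := (eventually_all.2 fun v =>
    eventually_mul_pow_eq_map_of_mem hq hl h (g v).2).exists
  choose t ht hgt using hN
  have hsum : φ (∑ v, t v * mon q (natTriple v)) = 0 :=
    calc φ (∑ v, t v * mon q (natTriple v))
        = ∑ v, (g v : R) * φ (aq q ^ l) ^ N * mapMon φ l v := by
          simp only [map_sum, map_mul, hgt, mapMon_eq]
      _ = (∑ v, g v • mapMon φ l v) * φ (aq q ^ l) ^ N := by
          simp only [Subalgebra.smul_def, smul_eq_mul, mul_assoc, hcomm, Finset.mul_sum]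
      _ = 0 := by rw [hg, zero_mul]
  obtain ⟨n, hn⟩ := h.ker _ hsum
  have htn : t v * (aq q ^ l) ^ n = 0 := by
    refine eq_zero_of_sum_mul_mon_eq_zero (hq.ne_zero hl.pos.ne') hq.pow_eq_one
      (t := fun v => t v * (aq q ^ l) ^ n) (fun v => mul_mem (ht v) (pow_mem
        (Algebra.subset_adjoin (by simp)) n)) ?_ v
    rw [← hn, Finset.sum_mul]
    refine Finset.sum_congr rfl fun v _ => ?_
    rw [mul_assoc, mul_assoc, Subalgebra.mem_center_iff.1 (pow_mem hα n)]
  have hgv : (g v : R) * φ (aq q ^ l) ^ (N + n) = 0 := by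
    rw [pow_add, ← mul_assoc, hgt, ← map_pow, ← map_mul, htn, map_zero]
  exact Subtype.ext ((h.isUnit.pow _).mul_left_eq_zero.1 hgv)

theorem inv_mul_map_a (h : IsLocalizationAtPow φ (aq q ^ l) u) (hl : 0 < l) :
    u * φ (aq q) ^ (l - 1) * φ (aq q) = 1 := by
  rw [mul_assoc, ← pow_succ, Nat.sub_add_cancel hl, ← map_pow, h.inv_mul_map]

theorem map_a_mul_inv (hq : IsPrimitiveRoot q l) (hl : Odd l)
    (h : IsLocalizationAtPow φ (aq q ^ l) u) : φ (aq q) * (u * φ (aq q) ^ (l - 1)) = 1 := by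
  rw [← mul_assoc, Subalgebra.mem_center_iff.1
    (h.inv_mem_center (a_pow_mem_center hq.pow_eq_one hl.pos)), mul_assoc, ← pow_succ',
    Nat.sub_add_cancel hl.pos, ← map_pow, h.inv_mul_map]

theorem map_d (h : IsLocalizationAtPow φ (aq q ^ l) u) (hl : 0 < l) :
    φ (dq q) = u * (φ (aq q) ^ (l - 1) * (1 + q • (φ (bq q) * φ (cq q)))) :=
  calc φ (dq q) = u * φ (aq q) ^ (l - 1) * φ (aq q) * φ (dq q) := by
        rw [inv_mul_map_a h hl, one_mul]
    _ = u * (φ (aq q) ^ (l - 1) * φ (aq q * dq q)) := by simp only [map_mul, mul_assoc]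
    _ = _ := by simp only [a_mul_d, map_add, map_one, map_smul, map_mul]

theorem map_mon_mem_span (hql : q ^ l = 1) (hl : 0 < l) (w : ℕ × ℕ × ℕ) :
    φ (mon q w) ∈ span (localizedClassical φ u l) (Set.range (mapMon φ l)) := by
  let v : Fin l × Fin l × Fin l :=
    (⟨w.1 % l, Nat.mod_lt _ hl⟩, ⟨w.2.1 % l, Nat.mod_lt _ hl⟩, ⟨w.2.2 % l, Nat.mod_lt _ hl⟩)
  let w' : ℕ × ℕ × ℕ := (w.1 / l, w.2.1 / l, w.2.2 / l)
  have hw : w = l • w' + natTriple v := by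
    simp only [w', v, natTriple, Prod.smul_mk, smul_eq_mul, Prod.mk_add_mk, Nat.div_add_mod]
  have hw' : φ (mon q (l • w')) ∈ localizedClassical φ u l := by
    simp only [mon, Prod.smul_fst, Prod.smul_snd, smul_eq_mul, pow_mul, map_mul, map_pow]
    exact mul_mem (mul_mem (pow_mem (Algebra.subset_adjoin (by simp)) _)
      (pow_mem (Algebra.subset_adjoin (by simp)) _)) (pow_mem (Algebra.subset_adjoin (by simp)) _)
  rw [hw, mon_smul_add hql, map_mul, ← mapMon_eq]
  exact smul_mem _ (⟨_, hw'⟩ : localizedClassical φ u l) (subset_span ⟨v, rfl⟩)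

theorem map_mul_mem_span (hq : IsPrimitiveRoot q l) (hl : Odd l)
    (h : IsLocalizationAtPow φ (aq q ^ l) u) (x : ASLq q) {y : R}
    (hy : y ∈ span (localizedClassical φ u l) (Set.range (mapMon φ l))) :
    φ x * y ∈ span (localizedClassical φ u l) (Set.range (mapMon φ l)) := by
  set M := span (localizedClassical φ u l) (Set.range (mapMon φ l))
  have hq0 := hq.ne_zero hl.pos.ne'
  have hgen {g : ASLq q} (hg : ∀ w, ∃ (r : ℂ) (w' : ℕ × ℕ × ℕ), g * mon q w = r • mon q w')
      {y : R} (hy : y ∈ M) : φ g * y ∈ M := by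
    refine mul_mem_span_range_of_le_center (localizedClassical_le_center hq hl h) (fun v => ?_) hy
    obtain ⟨r, w', e⟩ := hg (natTriple v)
    rw [mapMon_eq, ← map_mul, e, map_smul]
    exact smul_of_tower_mem _ r (map_mon_mem_span hq.pow_eq_one hl.pos w')
  have ha {y : R} : y ∈ M → φ (aq q) * y ∈ M := hgen fun w => ⟨1, _, by rw [one_smul, a_mul_mon]⟩
  have hb {y : R} : y ∈ M → φ (bq q) * y ∈ M := hgen fun w => ⟨_, _, b_mul_mon hq0 w⟩
  have hc {y : R} : y ∈ M → φ (cq q) * y ∈ M := hgen fun w => ⟨_, _, c_mul_mon hq0 w⟩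
  induction x using induction_on generalizing y with
  | algebraMap r => rw [AlgHom.commutes, ← Algebra.smul_def]; exact smul_of_tower_mem _ r hy
  | a => exact ha hy
  | b => exact hb hy
  | c => exact hc hy
  | d =>
    have hapow (n : ℕ) {y : R} (hy : y ∈ M) : φ (aq q) ^ n * y ∈ M := by
      induction n with
      | zero => rwa [pow_zero, one_mul]
      | succ n ih => rw [pow_succ', mul_assoc]; exact ha ih
    rw [map_d h hl.pos, mul_assoc, mul_assoc, add_mul, one_mul, smul_mul_assoc, mul_assoc]
    exact smul_mem M ⟨u, Algebra.subset_adjoin (by simp)⟩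
      (hapow _ (add_mem hy (smul_of_tower_mem _ q (hb (hc hy)))))
  | add x x' hx hx' => rw [map_add, add_mul]; exact add_mem (hx hy) (hx' hy)
  | mul x x' hx hx' => rw [map_mul, mul_assoc]; exact hx (hx' hy)

theorem span_mapMon_eq_top (hq : IsPrimitiveRoot q l) (hl : Odd l)
    (h : IsLocalizationAtPow φ (aq q ^ l) u) :
    span (localizedClassical φ u l) (Set.range (mapMon φ l)) = ⊤ := by
  refine eq_top_iff.2 fun y _ => ?_
  obtain ⟨x, n, rfl⟩ := h.surj y
  have hun : u ^ n ∈ localizedClassical φ u l := pow_mem (Algebra.subset_adjoin (by simp)) n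
  have hone : (1 : R) ∈ span (localizedClassical φ u l) (Set.range (mapMon φ l)) := by
    simpa [mon] using map_mon_mem_span (φ := φ) (u := u) hq.pow_eq_one hl.pos 0
  rw [Subalgebra.mem_center_iff.1 (localizedClassical_le_center hq hl h hun), ← mul_one (φ x)]
  exact smul_mem _ ⟨_, hun⟩ (map_mul_mem_span hq hl h x hone)

end Localization

end SLq

/-- `R`, with `φ` and `u = φ(α)⁻¹`, is the localization of `A(SL_q(2))` at `α = a^l`, given by its
universal property; the `Algebra.adjoin` is `A(SL(2))[α⁻¹]`. -/
theorem stmt15 (q : ℂ) (l : ℕ) (hq : IsPrimitiveRoot q l) (hl : Odd l)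
    (R : Type) [Ring R] [Algebra ℂ R] (φ : ASLq q →ₐ[ℂ] R) (u : R)
    (hu₁ : φ (aq q ^ l) * u = 1) (hu₂ : u * φ (aq q ^ l) = 1)
    (hsurj : ∀ y : R, ∃ (x : ASLq q) (n : ℕ), y = φ x * u ^ n)
    (hker : ∀ x : ASLq q, φ x = 0 → ∃ n : ℕ, x * (aq q ^ l) ^ n = 0) :
    (φ (aq q) * (u * φ (aq q) ^ (l - 1)) = 1 ∧
      (u * φ (aq q) ^ (l - 1)) * φ (aq q) = 1) ∧
    LinearIndependent
      (Algebra.adjoin ℂ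
        ({φ (aq q ^ l), φ (bq q ^ l), φ (cq q ^ l), φ (dq q ^ l), u} : Set R))
      (fun v : Fin l × Fin l × Fin l =>
        φ (aq q) ^ (v.1 : ℕ) * φ (bq q) ^ (v.2.1 : ℕ) * φ (cq q) ^ (v.2.2 : ℕ)) ∧
    Submodule.span
      (Algebra.adjoin ℂ
        ({φ (aq q ^ l), φ (bq q ^ l), φ (cq q ^ l), φ (dq q ^ l), u} : Set R))
      (Set.range (fun v : Fin l × Fin l × Fin l =>
        φ (aq q) ^ (v.1 : ℕ) * φ (bq q) ^ (v.2.1 : ℕ) * φ (cq q) ^ (v.2.2 : ℕ))) =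
      ⊤ := by
  have h : IsLocalizationAtPow φ (aq q ^ l) u := ⟨hu₁, hu₂, hsurj, hker⟩
  exact ⟨⟨SLq.map_a_mul_inv hq hl h, SLq.inv_mul_map_a h hl.pos⟩,
    SLq.linearIndependent_mapMon hq hl h, SLq.span_mapMon_eq_top hq hl h⟩
end
end
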